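/- The means I(a,b) and S(A(a,b), G(a,b)) cannot be compared: there exist distinct positive reals a, b with I(a,b) > S(A(a,b), G(a,b)), and there exist distinct positive reals a, b with I(a,b) < S(A(a,b), G(a,b)). -/

import Mathlib

/-!
For `a = 1 + t`, `b = 1 - t` one has `log I = -t²/6 + O(t⁴)` but `log S(A, G) = -t²/4 + O(t⁴)`,
so `I > S(A, G)` near the diagonal, while for very unequal arguments the order is reversed.
The pairs `(8, 2)` and `(196, 1)` witness the two cases: `A` and `G` are integers there, and
comparing the logarithms needs only `5³ < 2⁷`, `196 < 197`, `14 < 2⁴` and bounds on `log 2`.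
-/

noncomputable def A (a b : ℝ) : ℝ := (a + b) / 2
noncomputable def G (a b : ℝ) : ℝ := Real.sqrt (a * b)
noncomputable def S (a b : ℝ) : ℝ := (a ^ a * b ^ b) ^ (1 / (a + b))
noncomputable def I (a b : ℝ) : ℝ := (1 / Real.exp 1) * (a ^ a / b ^ b) ^ (1 / (a - b))

open Real

lemma S_pos {a b : ℝ} (ha : 0 < a) (hb : 0 < b) : 0 < S a b := by
  unfold S; positivity

lemma I_pos {a b : ℝ} (ha : 0 < a) (hb : 0 < b) : 0 < I a b := by
  unfold I; positivity

lemma log_S {a b : ℝ} (ha : 0 < a) (hb : 0 < b) :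
    log (S a b) = (a * log a + b * log b) / (a + b) := by
  unfold S
  rw [log_rpow (by positivity), log_mul (by positivity) (by positivity), log_rpow ha,
    log_rpow hb]
  ring

lemma log_I {a b : ℝ} (ha : 0 < a) (hb : 0 < b) :
    log (I a b) = (a * log a - b * log b) / (a - b) - 1 := by
  unfold I
  rw [log_mul (by positivity) (by positivity), one_div, log_inv, log_exp,
    log_rpow (by positivity), log_div (by positivity) (by positivity), log_rpow ha,
    log_rpow hb]
  ring

lemma G_eq_of_mul_eq_sq {a b c : ℝ} (hc : 0 ≤ c) (h : a * b = c ^ 2) : G a b = c := by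
  rw [G, h, sqrt_sq hc]

lemma S_A_G_lt_I_8_2 : S (A 8 2) (G 8 2) < I 8 2 := by
  rw [show A 8 2 = 5 by norm_num [A], G_eq_of_mul_eq_sq (c := 4) (by norm_num) (by norm_num),
    ← log_lt_log_iff (S_pos (by norm_num) (by norm_num)) (I_pos (by norm_num) (by norm_num)),
    log_S (by norm_num) (by norm_num), log_I (by norm_num) (by norm_num)]
  have log_five : 3 * log 5 < 7 * log 2 := by
    simpa only [log_pow, Nat.cast_ofNat] using
      log_lt_log (by norm_num) (show (5 : ℝ) ^ 3 < 2 ^ 7 by norm_num)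
  have log_four : log 4 = 2 * log 2 := by
    simpa only [log_pow, Nat.cast_ofNat] using congrArg log (show (4 : ℝ) = 2 ^ 2 by norm_num)
  have log_eight : log 8 = 3 * log 2 := by
    simpa only [log_pow, Nat.cast_ofNat] using congrArg log (show (8 : ℝ) = 2 ^ 3 by norm_num)
  rw [log_four, log_eight]
  linarith [log_two_gt_d9]

lemma I_lt_S_A_G_196_1 : I 196 1 < S (A 196 1) (G 196 1) := by
  rw [show A 196 1 = 197 / 2 by norm_num [A],
    G_eq_of_mul_eq_sq (c := 14) (by norm_num) (by norm_num),
    ← log_lt_log_iff (I_pos (by norm_num) (by norm_num)) (S_pos (by norm_num) (by norm_num)),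
    log_S (by norm_num) (by norm_num), log_I (by norm_num) (by norm_num),
    log_div (by norm_num) (by norm_num), log_one]
  have log_196 : log 196 = 2 * log 14 := by
    simpa only [log_pow, Nat.cast_ofNat] using congrArg log (show (196 : ℝ) = 14 ^ 2 by norm_num)
  have log_197 : log 196 < log 197 := log_lt_log (by norm_num) (by norm_num)
  have log_14 : log 14 < 4 * log 2 := by
    simpa only [log_pow, Nat.cast_ofNat] using
      log_lt_log (by norm_num) (show (14 : ℝ) < 2 ^ 4 by norm_num)
  rw [log_196] at log_197 ⊢
  ring_nf
  linarith [log_two_lt_d9]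

theorem stmt_12 :
    (∃ a b : ℝ, 0 < a ∧ 0 < b ∧ a ≠ b ∧ I a b > S (A a b) (G a b)) ∧
    (∃ a b : ℝ, 0 < a ∧ 0 < b ∧ a ≠ b ∧ I a b < S (A a b) (G a b)) :=
  ⟨⟨8, 2, by norm_num, by norm_num, by norm_num, S_A_G_lt_I_8_2⟩,
    ⟨196, 1, by norm_num, by norm_num, by norm_num, I_lt_S_A_G_196_1⟩⟩
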